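/- Let A be a finite-dimensional algebra over a field k and let Q be a finite quiver with vertex set Q_0. A module M over A ⊗_k kQ lies in the monomorphism category if and only if for every vertex i the map ⊕_{α : t(α)=i} M_{s(α)} → M_i, given componentwise by the action of the arrows α, is injective. Show: if M and N lie in the monomorphism category and 0 → M → E → N → 0 is a short exact sequence of A ⊗_k kQ-modules, then E lies in the monomorphism category (i.e. the monomorphism category is extension-closed). -/

import Mathlib

open Function

lemma Function.Exact.piMap {ι : Type*} {α β γ : ι → Type*} [∀ i, Zero (γ i)]
    {f : ∀ i, α i → β i} {g : ∀ i, β i → γ i} (h : ∀ i, Exact (f i) (g i)) :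
    Exact (Pi.map f) (Pi.map g) := by
  intro y
  simp only [funext_iff, Pi.map_apply, Pi.zero_apply, h _ _, Set.mem_range]
  exact ⟨fun hy ↦ ⟨fun i ↦ (hy i).choose, fun i ↦ (hy i).choose_spec⟩,
    fun ⟨x, hx⟩ i ↦ ⟨x i, hx i⟩⟩

namespace QuiverRep

variable {A V : Type*} [Ring A] (E : V → V → Type*) {M X N : V → Type*}
  [∀ i, AddCommGroup (M i)] [∀ i, Module A (M i)]
  [∀ i, AddCommGroup (X i)] [∀ i, Module A (X i)]
  [∀ i, AddCommGroup (N i)] [∀ i, Module A (N i)]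

def mapIncoming (φ : ∀ i, M i →ₗ[A] X i) (i : V) :
    (∀ j, E j i → M j) →ₗ[A] (∀ j, E j i → X j) :=
  LinearMap.piMap fun j ↦ LinearMap.piMap fun _ ↦ φ j

lemma injective_mapIncoming {φ : ∀ i, M i →ₗ[A] X i} (h : ∀ i, Injective (φ i)) (i : V) :
    Injective (mapIncoming E φ i) :=
  Injective.piMap fun j ↦ Injective.piMap fun _ ↦ h j

lemma exact_mapIncoming {φ : ∀ i, M i →ₗ[A] X i} {ψ : ∀ i, X i →ₗ[A] N i}
    (h : ∀ i, Exact (φ i) (ψ i)) (i : V) :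
    Exact (mapIncoming E φ i) (mapIncoming E ψ i) :=
  Exact.piMap fun j ↦ Exact.piMap fun _ ↦ h j

variable {E} [Fintype V] [∀ i j, Fintype (E i j)]

def inMap (Mf : ∀ i j, E i j → M i →ₗ[A] M j) (i : V) : (∀ j, E j i → M j) →ₗ[A] M i :=
  ∑ j, ∑ a : E j i, Mf j i a ∘ₗ LinearMap.proj a ∘ₗ LinearMap.proj j

@[simp]
lemma inMap_apply (Mf : ∀ i j, E i j → M i →ₗ[A] M j) (i : V) (u : ∀ j, E j i → M j) :
    inMap Mf i u = ∑ j, ∑ a : E j i, Mf j i a (u j a) := by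
  simp [inMap]

lemma injective_inMap_iff (Mf : ∀ i j, E i j → M i →ₗ[A] M j) (i : V) :
    Injective (inMap Mf i) ↔
      ∀ u : ∀ j, E j i → M j, ∑ j, ∑ a : E j i, Mf j i a (u j a) = 0 → ∀ j a, u j a = 0 := by
  simp [injective_iff_map_eq_zero, funext_iff]

lemma comp_inMap {Mf : ∀ i j, E i j → M i →ₗ[A] M j} {Xf : ∀ i j, E i j → X i →ₗ[A] X j}
    {φ : ∀ i, M i →ₗ[A] X i}
    (hφ : ∀ i j (a : E i j) (x : M i), φ j (Mf i j a x) = Xf i j a (φ i x)) (i : V) :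
    φ i ∘ₗ inMap Mf i = inMap Xf i ∘ₗ mapIncoming E φ i := by
  ext u
  simp [mapIncoming, hφ]

/-- The four lemma, applied to the in-maps as vertical arrows between the rows
`0 → ⊕ M_{s(a)} → ⊕ X_{s(a)} → ⊕ N_{s(a)}` and `0 → M_i → X_i → N_i`. -/
theorem injective_inMap_of_exact {Mf : ∀ i j, E i j → M i →ₗ[A] M j}
    {Xf : ∀ i j, E i j → X i →ₗ[A] X j} {Nf : ∀ i j, E i j → N i →ₗ[A] N j}
    {φ : ∀ i, M i →ₗ[A] X i} {ψ : ∀ i, X i →ₗ[A] N i}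
    (hφ : ∀ i j (a : E i j) (x : M i), φ j (Mf i j a x) = Xf i j a (φ i x))
    (hψ : ∀ i j (a : E i j) (x : X i), ψ j (Xf i j a x) = Nf i j a (ψ i x))
    (hφinj : ∀ i, Injective (φ i)) (hexact : ∀ i, Exact (φ i) (ψ i)) (i : V)
    (hM : Injective (inMap Mf i)) (hN : Injective (inMap Nf i)) :
    Injective (inMap Xf i) :=
  AddMonoidHom.injective_of_surjective_of_injective_of_injective
    (0 : Unit →+ _) (mapIncoming E φ i).toAddMonoidHom (mapIncoming E ψ i).toAddMonoidHom
    (0 : Unit →+ _) (φ i).toAddMonoidHom (ψ i).toAddMonoidHom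
    (0 : Unit →+ Unit) (inMap Mf i).toAddMonoidHom (inMap Xf i).toAddMonoidHom
    (inMap Nf i).toAddMonoidHom
    (by ext; simp) (congrArg LinearMap.toAddMonoidHom (comp_inMap hφ i))
    (congrArg LinearMap.toAddMonoidHom (comp_inMap hψ i))
    ((LinearMap.exact_zero_iff_injective Unit _).2 (injective_mapIncoming E hφinj i))
    (exact_mapIncoming E hexact i)
    ((LinearMap.exact_zero_iff_injective Unit _).2 (hφinj i))
    (fun _ ↦ ⟨0, rfl⟩) hM hN

end QuiverRep

theorem stmt_7_general {A : Type} [Ring A]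
    {V : Type} [Fintype V] (E : V → V → Type) [∀ i j, Fintype (E i j)]
    (M N X : V → Type)
    [∀ i, AddCommGroup (M i)] [∀ i, Module A (M i)]
    [∀ i, AddCommGroup (N i)] [∀ i, Module A (N i)]
    [∀ i, AddCommGroup (X i)] [∀ i, Module A (X i)]
    (Mf : ∀ i j, E i j → (M i →ₗ[A] M j))
    (Nf : ∀ i j, E i j → (N i →ₗ[A] N j))
    (Xf : ∀ i j, E i j → (X i →ₗ[A] X j))
    -- the short exact sequence `0 → M → X → N → 0` of representations:
    (φ : ∀ i, M i →ₗ[A] X i) (ψ : ∀ i, X i →ₗ[A] N i)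
    (hφcomm : ∀ i j (a : E i j) (x : M i), φ j (Mf i j a x) = Xf i j a (φ i x))
    (hψcomm : ∀ i j (a : E i j) (x : X i), ψ j (Xf i j a x) = Nf i j a (ψ i x))
    (hφinj : ∀ i, Function.Injective (φ i))
    (hexact : ∀ i (x : X i), ψ i x = 0 ↔ x ∈ LinearMap.range (φ i))
    -- `M` and `N` lie in the monomorphism category:
    (hM : ∀ i (u : ∀ j, E j i → M j),
      (∑ j, ∑ a : E j i, Mf j i a (u j a)) = 0 → ∀ j a, u j a = 0)
    (hN : ∀ i (u : ∀ j, E j i → N j),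
      (∑ j, ∑ a : E j i, Nf j i a (u j a)) = 0 → ∀ j a, u j a = 0) :
    -- then `X` lies in the monomorphism category:
    ∀ i (u : ∀ j, E j i → X j),
      (∑ j, ∑ a : E j i, Xf j i a (u j a)) = 0 → ∀ j a, u j a = 0 := by
  intro i
  rw [← QuiverRep.injective_inMap_iff]
  refine QuiverRep.injective_inMap_of_exact hφcomm hψcomm hφinj (fun j x ↦ ?_) i
    ((QuiverRep.injective_inMap_iff Mf i).2 (hM i))
    ((QuiverRep.injective_inMap_iff Nf i).2 (hN i))
  simpa using hexact j x

/-- The monomorphism category is extension-closed.  Here a module over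
`A ⊗_k kQ` for a finite quiver `Q` (vertex set `V`, arrows `E i j` from `i` to `j`) over a
finite-dimensional `k`-algebra `A` is encoded as a representation: an `A`-module `M i` at
each vertex and `A`-linear maps `Mf i j a : M i → M j` for each arrow `a : E i j`.  It lies
in the monomorphism category iff for every vertex `i` the in-map
`⊕_{a : t(a) = i} M_{s(a)} → M i`, `u ↦ ∑ Mf a (u a)`, is injective (equivalently, has zero
kernel).  If `M` and `N` lie in the monomorphism category and
`0 → M →φ X →ψ N → 0` is a short exact sequence of representations, then `X` lies in the
monomorphism category. -/
theorem stmt_7 {k : Type} [Field k] {A : Type} [Ring A] [Algebra k A] [FiniteDimensional k A]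
    {V : Type} [Fintype V] (E : V → V → Type) [∀ i j, Fintype (E i j)]
    (M N X : V → Type)
    [∀ i, AddCommGroup (M i)] [∀ i, Module A (M i)]
    [∀ i, AddCommGroup (N i)] [∀ i, Module A (N i)]
    [∀ i, AddCommGroup (X i)] [∀ i, Module A (X i)]
    (Mf : ∀ i j, E i j → (M i →ₗ[A] M j))
    (Nf : ∀ i j, E i j → (N i →ₗ[A] N j))
    (Xf : ∀ i j, E i j → (X i →ₗ[A] X j))
    -- the short exact sequence `0 → M → X → N → 0` of representations:
    (φ : ∀ i, M i →ₗ[A] X i) (ψ : ∀ i, X i →ₗ[A] N i)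
    (hφcomm : ∀ i j (a : E i j) (x : M i), φ j (Mf i j a x) = Xf i j a (φ i x))
    (hψcomm : ∀ i j (a : E i j) (x : X i), ψ j (Xf i j a x) = Nf i j a (ψ i x))
    (hφinj : ∀ i, Function.Injective (φ i))
    (hψsurj : ∀ i, Function.Surjective (ψ i))
    (hexact : ∀ i (x : X i), ψ i x = 0 ↔ x ∈ LinearMap.range (φ i))
    -- `M` and `N` lie in the monomorphism category:
    (hM : ∀ i (u : ∀ j, E j i → M j),
      (∑ j, ∑ a : E j i, Mf j i a (u j a)) = 0 → ∀ j a, u j a = 0)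
    (hN : ∀ i (u : ∀ j, E j i → N j),
      (∑ j, ∑ a : E j i, Nf j i a (u j a)) = 0 → ∀ j a, u j a = 0) :
    -- then `X` lies in the monomorphism category:
    ∀ i (u : ∀ j, E j i → X j),
      (∑ j, ∑ a : E j i, Xf j i a (u j a)) = 0 → ∀ j a, u j a = 0 :=
  stmt_7_general E M N X Mf Nf Xf φ ψ hφcomm hψcomm hφinj hexact hM hN
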